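/- The function (Σ₁, Σ₂) ↦ −2 Trace((Σ₁^{1/2} Σ₂ Σ₁^{1/2})^{1/2}) is jointly convex on pairs of positive definite symmetric d×d matrices. -/

import Mathlib

/-!
Twice the cross term is a minimum of functions that are linear in `(A, B) = (Σ₁, Σ₂)`:
`2 Tr((A^{1/2} B A^{1/2})^{1/2}) = min_{X > 0} (Tr(A X) + Tr(B X⁻¹))`, and a pointwise minimum
of linear functions is concave. With `C = A^{1/2}`, `Z = C X C` and `M = (C B C)^{1/2}` the
objective becomes `Tr Z + Tr(M² Z⁻¹)`, which exceeds `2 Tr M` by `Tr((Z - M) Z⁻¹ (Z - M)) ≥ 0`,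
with equality at `Z = M`.
-/

open Matrix

open Classical in
noncomputable def msqrt {d : ℕ} (A : Matrix (Fin d) (Fin d) ℝ) : Matrix (Fin d) (Fin d) ℝ :=
  if h : A.PosSemidef then
    (h.1.eigenvectorUnitary : Matrix (Fin d) (Fin d) ℝ) *
      diagonal ((↑) ∘ (√·) ∘ h.1.eigenvalues) *
      (star h.1.eigenvectorUnitary : Matrix (Fin d) (Fin d) ℝ)
  else 0

theorem concaveOn_of_forall_le_of_exists_eq {𝕜 E β ι : Type*} [Semiring 𝕜] [PartialOrder 𝕜]
    [AddCommMonoid E] [SMul 𝕜 E] [AddCommMonoid β] [PartialOrder β] [IsOrderedAddMonoid β]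
    [Module 𝕜 β] [PosSMulMono 𝕜 β] {s : Set E} {f : E → β} {g : ι → E → β} (hs : Convex 𝕜 s)
    (hg : ∀ i, ConcaveOn 𝕜 s (g i)) (hle : ∀ i, ∀ x ∈ s, f x ≤ g i x)
    (hex : ∀ x ∈ s, ∃ i, g i x = f x) : ConcaveOn 𝕜 s f := by
  refine ⟨hs, fun x hx y hy a b ha hb hab => ?_⟩
  obtain ⟨i, hi⟩ := hex _ (hs hx hy ha hb hab)
  calc a • f x + b • f y ≤ a • g i x + b • g i y :=
        add_le_add (smul_le_smul_of_nonneg_left (hle i x hx) ha)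
          (smul_le_smul_of_nonneg_left (hle i y hy) hb)
    _ ≤ g i (a • x + b • y) := (hg i).2 hx hy ha hb hab
    _ = f (a • x + b • y) := hi

namespace Matrix

open scoped ComplexOrder in
theorem convex_setOf_posDef {n 𝕜 : Type*} [RCLike 𝕜] :
    Convex ℝ {A : Matrix n n 𝕜 | A.PosDef} := by
  intro A hA B hB a b ha hb hab
  rcases ha.eq_or_lt with rfl | ha
  · rw [zero_add] at hab
    simpa [hab] using hB
  · exact (PosDef.smul hA ha).add_posSemidef (hB.posSemidef.smul hb)

variable {n : Type*} [Fintype n] [DecidableEq n]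

theorem trace_mul_add_trace_mul_inv_eq_of_isUnit {R : Type*} [CommRing R] {C B X : Matrix n n R}
    (hC : IsUnit C) :
    (C * C * X).trace + (B * X⁻¹).trace = (C * X * C).trace + (C * B * C * (C * X * C)⁻¹).trace := by
  have hdet : IsUnit C.det := (isUnit_iff_isUnit_det C).1 hC
  have hconj : C * B * C * (C * X * C)⁻¹ = C * (B * X⁻¹) * C⁻¹ := by
    simp only [mul_inv_rev, Matrix.mul_assoc, mul_nonsing_inv_cancel_left C _ hdet]
  rw [hconj, trace_mul_cycle C (B * X⁻¹) C⁻¹, nonsing_inv_mul C hdet, Matrix.one_mul,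
    trace_mul_cycle C X C]

theorem two_mul_trace_le_trace_add_trace_mul_inv {Z M : Matrix n n ℝ} (hZ : Z.PosDef)
    (hM : M.IsHermitian) : 2 * M.trace ≤ Z.trace + (M * M * Z⁻¹).trace := by
  have hnonneg := (hZ.inv.posSemidef.conjTranspose_mul_mul_same (Z - M)).trace_nonneg
  have hdet : IsUnit Z.det := (isUnit_iff_isUnit_det Z).1 hZ.isUnit
  have hZZ : Z * Z⁻¹ = 1 := mul_nonsing_inv Z hdet
  have hZZ' : Z⁻¹ * Z = 1 := nonsing_inv_mul Z hdet
  have hexpand : ((Z - M)ᴴ * Z⁻¹ * (Z - M)).trace = Z.trace - 2 * M.trace + (M * M * Z⁻¹).trace := by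
    rw [conjTranspose_sub, hZ.1.eq, hM.eq]
    simp only [sub_mul, mul_sub, trace_sub, hZZ, Matrix.one_mul]
    rw [Matrix.mul_assoc M Z⁻¹ Z, hZZ', Matrix.mul_one, trace_mul_cycle M Z⁻¹ M]
    ring
  linarith

theorem concaveOn_trace_mul_add_trace_mul {R : Type*} [CommRing R] [PartialOrder R]
    {s : Set (Matrix n n R × Matrix n n R)} (hs : Convex R s) (X Y : Matrix n n R) :
    ConcaveOn R s (fun p => (p.1 * X).trace + (p.2 * Y).trace) :=
  ((traceLinearMap n R R ∘ₗ LinearMap.mulRight R X).coprod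
    (traceLinearMap n R R ∘ₗ LinearMap.mulRight R Y)).concaveOn hs

end Matrix

section msqrt

open scoped MatrixOrder

variable {d : ℕ} {A B X : Matrix (Fin d) (Fin d) ℝ}

theorem msqrt_eq_sqrt (hA : A.PosSemidef) : msqrt A = CFC.sqrt A := by
  rw [msqrt, dif_pos hA, CFC.sqrt_eq_real_sqrt A hA.nonneg, cfcₙ_eq_cfc, hA.1.cfc_eq,
    IsHermitian.cfc, Unitary.conjStarAlgAut_apply]
  rfl

theorem Matrix.PosSemidef.msqrt (hA : A.PosSemidef) : (msqrt A).PosSemidef := by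
  rw [msqrt_eq_sqrt hA, ← nonneg_iff_posSemidef]
  exact CFC.sqrt_nonneg A

theorem Matrix.PosDef.msqrt (hA : A.PosDef) : (msqrt A).PosDef := by
  rw [msqrt_eq_sqrt hA.posSemidef, ← isStrictlyPositive_iff_posDef]
  exact IsStrictlyPositive.sqrt A (isStrictlyPositive_iff_posDef.2 hA)

theorem msqrt_mul_self (hA : A.PosSemidef) : msqrt A * msqrt A = A := by
  rw [msqrt_eq_sqrt hA, CFC.sqrt_mul_sqrt_self A hA.nonneg]

theorem two_mul_trace_msqrt_le (hA : A.PosDef) (hB : B.PosSemidef) (hX : X.PosDef) :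
    2 * (msqrt (msqrt A * B * msqrt A)).trace ≤ (A * X).trace + (B * X⁻¹).trace := by
  set C := msqrt A
  have hC : C.PosDef := hA.msqrt
  have hCBC : (C * B * C).PosSemidef := by
    simpa only [hC.1.eq] using hB.mul_mul_conjTranspose_same C
  have hCXC : (C * X * C).PosDef := by
    simpa only [star_eq_conjTranspose, hC.1.eq] using
      (IsUnit.posDef_star_right_conjugate_iff hC.isUnit).2 hX
  set M := msqrt (C * B * C)
  calc 2 * M.trace ≤ (C * X * C).trace + (M * M * (C * X * C)⁻¹).trace :=
        two_mul_trace_le_trace_add_trace_mul_inv hCXC hCBC.msqrt.1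
    _ = (C * C * X).trace + (B * X⁻¹).trace := by
        rw [msqrt_mul_self hCBC, trace_mul_add_trace_mul_inv_eq_of_isUnit hC.isUnit]
    _ = (A * X).trace + (B * X⁻¹).trace := by rw [msqrt_mul_self hA.posSemidef]

theorem exists_posDef_trace_eq_two_mul_trace_msqrt (hA : A.PosDef) (hB : B.PosDef) :
    ∃ X : Matrix (Fin d) (Fin d) ℝ, X.PosDef ∧
      (A * X).trace + (B * X⁻¹).trace = 2 * (msqrt (msqrt A * B * msqrt A)).trace := by
  set C := msqrt A
  have hC : C.PosDef := hA.msqrt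
  have hCBC : (C * B * C).PosDef := by
    simpa only [star_eq_conjTranspose, hC.1.eq] using
      (IsUnit.posDef_star_right_conjugate_iff hC.isUnit).2 hB
  set M := msqrt (C * B * C)
  have hM : M.PosDef := hCBC.msqrt
  have hMM : M * M = C * B * C := msqrt_mul_self hCBC.posSemidef
  have hdet : IsUnit C.det := (isUnit_iff_isUnit_det C).1 hC.isUnit
  have hCMC : C * (C⁻¹ * M * C⁻¹) * C = M := by
    simp only [Matrix.mul_assoc, nonsing_inv_mul C hdet, Matrix.mul_one,
      mul_nonsing_inv_cancel_left C M hdet]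
  refine ⟨C⁻¹ * M * C⁻¹, ?_, ?_⟩
  · simpa only [star_eq_conjTranspose, hC.inv.1.eq] using
      (IsUnit.posDef_star_right_conjugate_iff hC.inv.isUnit).2 hM
  · rw [← msqrt_mul_self hA.posSemidef, trace_mul_add_trace_mul_inv_eq_of_isUnit hC.isUnit, hCMC,
      ← hMM, mul_nonsing_inv_cancel_right _ _ ((isUnit_iff_isUnit_det M).1 hM.isUnit), two_mul]

end msqrt

/-- `(Σ₁, Σ₂) ↦ −2 Tr((Σ₁^{1/2} Σ₂ Σ₁^{1/2})^{1/2})` is jointly convex on pairs of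
positive definite matrices. -/
theorem bures_cross_term_jointly_convex {d : ℕ} :
    ConvexOn ℝ
      {p : Matrix (Fin d) (Fin d) ℝ × Matrix (Fin d) (Fin d) ℝ |
        p.1.PosDef ∧ p.2.PosDef}
      (fun p => -2 * (msqrt (msqrt p.1 * p.2 * msqrt p.1)).trace) := by
  have hs : Convex ℝ {p : Matrix (Fin d) (Fin d) ℝ × Matrix (Fin d) (Fin d) ℝ |
      p.1.PosDef ∧ p.2.PosDef} :=
    convex_setOf_posDef.prod convex_setOf_posDef
  have hconcave : ConcaveOn ℝ {p : Matrix (Fin d) (Fin d) ℝ × Matrix (Fin d) (Fin d) ℝ |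
      p.1.PosDef ∧ p.2.PosDef} (fun p => 2 * (msqrt (msqrt p.1 * p.2 * msqrt p.1)).trace) :=
    concaveOn_of_forall_le_of_exists_eq hs
      (g := fun (X : {X : Matrix (Fin d) (Fin d) ℝ // X.PosDef}) p =>
        (p.1 * X).trace + (p.2 * (X : Matrix (Fin d) (Fin d) ℝ)⁻¹).trace)
      (fun X => concaveOn_trace_mul_add_trace_mul hs _ _)
      (fun X p hp => two_mul_trace_msqrt_le hp.1 hp.2.posSemidef X.2)
      (fun p hp => by
        obtain ⟨X, hX, hX_eq⟩ := exists_posDef_trace_eq_two_mul_trace_msqrt hp.1 hp.2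
        exact ⟨⟨X, hX⟩, hX_eq⟩)
  simpa only [Pi.neg_def, neg_mul] using hconcave.neg
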